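/- arXiv:1710.05506 — 2 statements merged into one kernel-verified Lean document; each statement's English description precedes it below -/
import Mathlib

section
/- Let D₁₀ ⊆ ℝ² be the decagon given as the convex hull of the ten points (−3/5, −5/4), (3/5, −3/4), (7/5, −1/4), (8/5, 1/4), (7/5, 3/4), (3/5, 5/4), (−3/5, 3/4), (−7/5, 1/4), (−8/5, −1/4), (−7/5, −3/4). Then D₁₀ + ℤ² is a five-fold lattice tiling of ℝ². -/
/-!
Every horizontal line meets `D₁₀` in an interval, and the vertices of `D₁₀` lie at the heights
`±1/4, ±3/4, ±5/4`. The lattice points `(m, k)` with `x - (m, k) ∈ D₁₀` fall into rows: row `k`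
consists of the integers `m` with `x 0 - m` in the slice at height `x 1 - k`. Choose `n ∈ ℤ`
with `x 1 - n ∈ [-1/4, 3/4)`. If `|x 1 - n| ≤ 1/4`, row `n` contributes the integers of an
interval of length 3, and the slices of rows `n - 1` and `n + 1` are adjacent intervals making
up an interval of length 2. If `x 1 - n ∈ [1/4, 3/4]`, the slice of row `n + 1`, shifted by 2,
continues that of row `n` to an interval of length 5. A closed interval of integer length `ℓ`
contains at least `ℓ` integers and an open one at most `ℓ`.
-/

open Set

/-- `K + Λ` is a `k`-fold tiling of `ℝⁿ`: every point lies in at least `k`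
translates `K + v`, `v ∈ Λ`, and in at most `k` translates `int K + v`. -/
def IsKFoldTiling {n : ℕ} (K Λ : Set (Fin n → ℝ)) (k : ℕ) : Prop :=
  ∀ x : Fin n → ℝ,
    (k : ℕ∞) ≤ {v | v ∈ Λ ∧ x - v ∈ K}.encard ∧
    {v | v ∈ Λ ∧ x - v ∈ interior K}.encard ≤ (k : ℕ∞)

/-- The integer lattice `ℤⁿ ⊆ ℝⁿ`. -/
def intLattice (n : ℕ) : Set (Fin n → ℝ) := {v | ∀ i, ∃ m : ℤ, v i = m}

/-- The decagon `D₁₀`. -/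
noncomputable def D₁₀ : Set (Fin 2 → ℝ) :=
  convexHull ℝ ({![-3/5, -5/4], ![3/5, -3/4], ![7/5, -1/4], ![8/5, 1/4], ![7/5, 3/4],
    ![3/5, 5/4], ![-3/5, 3/4], ![-7/5, 1/4], ![-8/5, -1/4], ![-7/5, -3/4]} : Set (Fin 2 → ℝ))

section IntegersInIntervals

variable {R : Type*} [Ring R] [LinearOrder R] [FloorRing R]

lemma encard_intCast_preimage_Icc (p q : R) :
    (((↑) : ℤ → R) ⁻¹' Icc p q).encard = ((⌊q⌋ + 1 - ⌈p⌉).toNat : ℕ∞) := by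
  rw [Int.preimage_Icc, ← Finset.coe_Icc, encard_coe_eq_coe_finsetCard, Int.card_Icc]

lemma encard_intCast_preimage_Ioo (p q : R) :
    (((↑) : ℤ → R) ⁻¹' Ioo p q).encard = ((⌈q⌉ - ⌊p⌋ - 1).toNat : ℕ∞) := by
  rw [Int.preimage_Ioo, ← Finset.coe_Ioo, encard_coe_eq_coe_finsetCard, Int.card_Ioo]

variable [IsStrictOrderedRing R]

lemma natCast_le_encard_intCast_preimage_Icc (p : R) (ℓ : ℕ) :
    (ℓ : ℕ∞) ≤ (((↑) : ℤ → R) ⁻¹' Icc p (p + ℓ)).encard := by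
  rw [encard_intCast_preimage_Icc, Int.floor_add_natCast, Nat.cast_le]
  have := Int.ceil_le_floor_add_one p
  omega

lemma encard_intCast_preimage_Ioo_le (p : R) (ℓ : ℕ) :
    (((↑) : ℤ → R) ⁻¹' Ioo p (p + ℓ)).encard ≤ ℓ := by
  rw [encard_intCast_preimage_Ioo, Int.ceil_add_natCast, Nat.cast_le]
  have := Int.ceil_le_floor_add_one p
  omega

lemma encard_intCast_preimage_Icc_sub_intCast (p q : R) (k : ℤ) :
    (((↑) : ℤ → R) ⁻¹' Icc (p - k) (q - k)).encard = (((↑) : ℤ → R) ⁻¹' Icc p q).encard := by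
  rw [encard_intCast_preimage_Icc, encard_intCast_preimage_Icc, Int.floor_sub_intCast,
    Int.ceil_sub_intCast]
  congr 2; ring

lemma encard_intCast_preimage_Ioo_sub_intCast (p q : R) (k : ℤ) :
    (((↑) : ℤ → R) ⁻¹' Ioo (p - k) (q - k)).encard = (((↑) : ℤ → R) ⁻¹' Ioo p q).encard := by
  rw [encard_intCast_preimage_Ioo, encard_intCast_preimage_Ioo, Int.floor_sub_intCast,
    Int.ceil_sub_intCast]
  congr 2; ring

lemma natCast_le_encard_intCast_preimage_Icc_add {p r : R} {ℓ : ℕ} (hpr : p ≤ r)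
    (hr : r ≤ p + ℓ) :
    (ℓ : ℕ∞) ≤ (((↑) : ℤ → R) ⁻¹' Icc p r).encard + (((↑) : ℤ → R) ⁻¹' Icc r (p + ℓ)).encard :=
  calc (ℓ : ℕ∞) ≤ (((↑) : ℤ → R) ⁻¹' Icc p (p + ℓ)).encard :=
        natCast_le_encard_intCast_preimage_Icc p ℓ
    _ = (((↑) : ℤ → R) ⁻¹' Icc p r ∪ ((↑) : ℤ → R) ⁻¹' Icc r (p + ℓ)).encard := by
      rw [← preimage_union, Icc_union_Icc_eq_Icc hpr hr]
    _ ≤ _ := encard_union_le _ _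

lemma encard_intCast_preimage_Ioo_add_le {p r : R} {ℓ : ℕ} (hpr : p ≤ r) (hr : r ≤ p + ℓ) :
    (((↑) : ℤ → R) ⁻¹' Ioo p r).encard + (((↑) : ℤ → R) ⁻¹' Ioo r (p + ℓ)).encard ≤ ℓ :=
  calc _ = (((↑) : ℤ → R) ⁻¹' Ioo p r ∪ ((↑) : ℤ → R) ⁻¹' Ioo r (p + ℓ)).encard :=
        (encard_union_eq <| (Ico_disjoint_Ico_same.mono Ioo_subset_Ico_self
          Ioo_subset_Ico_self).preimage _).symm
    _ ≤ (((↑) : ℤ → R) ⁻¹' Ioo p (p + ℓ)).encard := by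
      rw [← preimage_union]
      exact encard_mono <| preimage_mono <|
        union_subset (Ioo_subset_Ioo_right hr) (Ioo_subset_Ioo_left hpr)
    _ ≤ ℓ := encard_intCast_preimage_Ioo_le p ℓ

end IntegersInIntervals

/-- One slab for each pair of opposite edges of `D₁₀`. -/
def InD₁₀ (u t : ℝ) : Prop :=
  |5 * u - 12 * t| ≤ 12 ∧ |5 * u - 8 * t| ≤ 9 ∧ |10 * u - 4 * t| ≤ 15 ∧ |10 * u + 4 * t| ≤ 17 ∧
    |5 * u + 8 * t| ≤ 13

def InInteriorD₁₀ (u t : ℝ) : Prop :=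
  |5 * u - 12 * t| < 12 ∧ |5 * u - 8 * t| < 9 ∧ |10 * u - 4 * t| < 15 ∧ |10 * u + 4 * t| < 17 ∧
    |5 * u + 8 * t| < 13

lemma convex_setOf_inD₁₀ : Convex ℝ {p : Fin 2 → ℝ | InD₁₀ (p 0) (p 1)} := by
  rintro p ⟨hp₁, hp₂, hp₃, hp₄, hp₅⟩ q ⟨hq₁, hq₂, hq₃, hq₄, hq₅⟩ s r hs hr hsr
  have slab {x y c : ℝ} (hx : |x| ≤ c) (hy : |y| ≤ c) : |s * x + r * y| ≤ c :=
    abs_le.mpr (convex_Icc (-c) c (abs_le.mp hx) (abs_le.mp hy) hs hr hsr)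
  simp only [InD₁₀, mem_ofPred_eq, Pi.add_apply, Pi.smul_apply, smul_eq_mul]
  refine ⟨?_, ?_, ?_, ?_, ?_⟩
  · convert slab hp₁ hq₁ using 2; ring
  · convert slab hp₂ hq₂ using 2; ring
  · convert slab hp₃ hq₃ using 2; ring
  · convert slab hp₄ hq₄ using 2; ring
  · convert slab hp₅ hq₅ using 2; ring

lemma mem_convexHull_of_trapezoid {V : Set (Fin 2 → ℝ)} (a b c e t₀ t₁ : ℝ) {s u t : ℝ}
    (hA : ![a, t₀] ∈ V) (hB : ![b, t₁] ∈ V) (hC : ![c, t₀] ∈ V) (hE : ![e, t₁] ∈ V)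
    (hs₀ : 0 ≤ s) (hs₁ : s ≤ 1) (hl : a + s * (b - a) ≤ u) (hr : u ≤ c + s * (e - c))
    (ht : t = t₀ + s * (t₁ - t₀)) : ![u, t] ∈ convexHull ℝ V := by
  have hS := convex_convexHull ℝ V
  have edge {a b : ℝ} (hA : ![a, t₀] ∈ V) (hB : ![b, t₁] ∈ V) :
      ![a + s * (b - a), t] ∈ convexHull ℝ V := by
    convert hS (subset_convexHull ℝ V hA) (subset_convexHull ℝ V hB)
      (by linarith : 0 ≤ 1 - s) hs₀ (by ring) using 1
    ext i; fin_cases i <;> simp [ht] <;> ring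
  obtain ⟨μ, ν, hμ, hν, hμν, rfl⟩ : u ∈ segment ℝ (a + s * (b - a)) (c + s * (e - c)) := by
    rw [segment_eq_Icc (hl.trans hr)]; exact ⟨hl, hr⟩
  convert hS (edge hA hB) (edge hC hE) hμ hν hμν using 1
  ext i; fin_cases i <;> simp
  rw [← add_mul, hμν, one_mul]

/-- Between consecutive vertex heights, `D₁₀` is the trapezoid spanned by one edge on each side. -/
lemma mem_D₁₀_of_inD₁₀ {u t : ℝ} (h : InD₁₀ u t) : ![u, t] ∈ D₁₀ := by
  obtain ⟨h₁, h₂, h₃, h₄, h₅⟩ := h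
  rw [abs_le] at h₁ h₂ h₃ h₄ h₅
  rw [D₁₀]
  rcases le_total t (-3/4) with ht₁ | ht₁
  · refine mem_convexHull_of_trapezoid (-3/5) (-7/5) (-3/5) (3/5) (-5/4) (-3/4) ?_ ?_ ?_ ?_
      (s := 2 * (t + 5/4)) (by linarith) (by linarith) (by linarith) (by linarith) (by ring) <;>
    simp only [mem_insert_iff, mem_singleton_iff] <;> tauto
  rcases le_total t (-1/4) with ht₂ | ht₂
  · refine mem_convexHull_of_trapezoid (-7/5) (-8/5) (3/5) (7/5) (-3/4) (-1/4) ?_ ?_ ?_ ?_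
      (s := 2 * (t + 3/4)) (by linarith) (by linarith) (by linarith) (by linarith) (by ring) <;>
    simp only [mem_insert_iff, mem_singleton_iff] <;> tauto
  rcases le_total t (1/4) with ht₃ | ht₃
  · refine mem_convexHull_of_trapezoid (-8/5) (-7/5) (7/5) (8/5) (-1/4) (1/4) ?_ ?_ ?_ ?_
      (s := 2 * (t + 1/4)) (by linarith) (by linarith) (by linarith) (by linarith) (by ring) <;>
    simp only [mem_insert_iff, mem_singleton_iff] <;> tauto
  rcases le_total t (3/4) with ht₄ | ht₄
  · refine mem_convexHull_of_trapezoid (-7/5) (-3/5) (8/5) (7/5) (1/4) (3/4) ?_ ?_ ?_ ?_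
      (s := 2 * (t - 1/4)) (by linarith) (by linarith) (by linarith) (by linarith) (by ring) <;>
    simp only [mem_insert_iff, mem_singleton_iff] <;> tauto
  · refine mem_convexHull_of_trapezoid (-3/5) (3/5) (7/5) (3/5) (3/4) (5/4) ?_ ?_ ?_ ?_
      (s := 2 * (t - 3/4)) (by linarith) (by linarith) (by linarith) (by linarith) (by ring) <;>
    simp only [mem_insert_iff, mem_singleton_iff] <;> tauto

lemma mem_D₁₀_iff (p : Fin 2 → ℝ) : p ∈ D₁₀ ↔ InD₁₀ (p 0) (p 1) := by
  refine ⟨fun hp => convexHull_min ?_ convex_setOf_inD₁₀ hp, fun hp => ?_⟩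
  · simp only [insert_subset_iff, singleton_subset_iff, mem_ofPred_eq, InD₁₀]
    norm_num [abs_le]
  · convert mem_D₁₀_of_inD₁₀ hp
    ext i; fin_cases i <;> rfl

/-- Each slab has a nonzero `u`-coefficient, so moving horizontally within `D₁₀` makes all
its inequalities strict. -/
lemma inInteriorD₁₀_of_mem_interior {p : Fin 2 → ℝ} (hp : p ∈ interior D₁₀) :
    InInteriorD₁₀ (p 0) (p 1) := by
  have hc : Continuous fun s : ℝ => p + s • (Pi.single 0 1 : Fin 2 → ℝ) := by fun_prop
  obtain ⟨ε, hε, hball⟩ := Metric.eventually_nhds_iff.mp <|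
    (hc.continuousAt (x := 0)).preimage_mem_nhds (by simpa using mem_interior_iff_mem_nhds.mp hp)
  have shift (s : ℝ) (hs : |s| < ε) : InD₁₀ (p 0 + s) (p 1) := by
    simpa [mem_D₁₀_iff] using hball (y := s) (by simpa [Real.dist_eq] using hs)
  obtain ⟨h₁, h₂, h₃, h₄, h₅⟩ := shift (ε / 2) (by rw [abs_of_pos (by positivity)]; linarith)
  obtain ⟨k₁, k₂, k₃, k₄, k₅⟩ :=
    shift (-(ε / 2)) (by rw [abs_neg, abs_of_pos (by positivity)]; linarith)
  rw [abs_le] at h₁ h₂ h₃ h₄ h₅ k₁ k₂ k₃ k₄ k₅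
  refine ⟨abs_lt.mpr ⟨?_, ?_⟩, abs_lt.mpr ⟨?_, ?_⟩, abs_lt.mpr ⟨?_, ?_⟩, abs_lt.mpr ⟨?_, ?_⟩,
    abs_lt.mpr ⟨?_, ?_⟩⟩ <;> linarith

def latticeCover (K : Set (Fin 2 → ℝ)) (x : Fin 2 → ℝ) : Set (Fin 2 → ℝ) :=
  {v | v ∈ intLattice 2 ∧ x - v ∈ K}

def latticeRow (K : Set (Fin 2 → ℝ)) (x : Fin 2 → ℝ) (n : ℤ) : Set ℤ :=
  {m | x - ![(m : ℝ), n] ∈ K}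

lemma latticeCover_eq_iUnion (K : Set (Fin 2 → ℝ)) (x : Fin 2 → ℝ) :
    latticeCover K x =
      ⋃ n : ℤ, (fun m : ℤ => ![(m : ℝ), n]) '' latticeRow K x n := by
  ext v
  simp only [latticeCover, mem_ofPred_eq, mem_iUnion, mem_image, latticeRow]
  constructor
  · rintro ⟨hv, hK⟩
    obtain ⟨⟨m, hm⟩, ⟨n, hn⟩⟩ := And.intro (hv 0) (hv 1)
    have hv' : ![(m : ℝ), n] = v := by ext i; fin_cases i <;> simp [hm, hn]
    exact ⟨n, m, hv' ▸ hK, hv'⟩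
  · rintro ⟨n, m, hm, rfl⟩
    exact ⟨fun i => by fin_cases i; exacts [⟨m, rfl⟩, ⟨n, rfl⟩], hm⟩

lemma encard_biUnion_latticeRow (K : Set (Fin 2 → ℝ)) (x : Fin 2 → ℝ) (F : Finset ℤ) :
    (⋃ n ∈ F, (fun m : ℤ => ![(m : ℝ), n]) '' latticeRow K x n).encard =
      ∑ n ∈ F, (latticeRow K x n).encard := by
  rw [← Finset.set_biUnion_coe, F.finite_toSet.encard_biUnion, finsum_mem_coe_finset]
  · refine Finset.sum_congr rfl fun n _ => (Function.Injective.encard_image ?_ _)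
    intro m m' h
    simpa using congrFun h 0
  · intro n _ n' _ hn
    refine disjoint_left.mpr ?_
    rintro _ ⟨m, -, rfl⟩ ⟨m', -, h⟩
    exact hn (by simpa using (congrFun h 1).symm)

lemma sum_encard_latticeRow_le_encard_latticeCover (K : Set (Fin 2 → ℝ)) (x : Fin 2 → ℝ)
    (F : Finset ℤ) :
    ∑ n ∈ F, (latticeRow K x n).encard ≤ (latticeCover K x).encard := by
  rw [latticeCover_eq_iUnion, ← encard_biUnion_latticeRow]
  exact encard_mono (iUnion₂_subset fun n _ => subset_iUnion_of_subset n le_rfl)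

lemma encard_latticeCover_le_sum_latticeRow {K : Set (Fin 2 → ℝ)} {x : Fin 2 → ℝ} (F : Finset ℤ)
    (hF : ∀ n m, m ∈ latticeRow K x n → n ∈ F) :
    (latticeCover K x).encard ≤ ∑ n ∈ F, (latticeRow K x n).encard := by
  rw [latticeCover_eq_iUnion, ← encard_biUnion_latticeRow]
  refine encard_mono (iUnion_subset fun n => ?_)
  rintro _ ⟨m, hm, rfl⟩
  exact mem_biUnion (hF n m hm) ⟨m, hm, rfl⟩

lemma mem_latticeRow_D₁₀ {x : Fin 2 → ℝ} {n m : ℤ} :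
    m ∈ latticeRow D₁₀ x n ↔ InD₁₀ (x 0 - m) (x 1 - n) := by
  simp only [latticeRow, mem_ofPred_eq, mem_D₁₀_iff, Pi.sub_apply, Matrix.cons_val_zero,
    Matrix.cons_val_one]

lemma inInteriorD₁₀_of_mem_latticeRow {x : Fin 2 → ℝ} {n m : ℤ}
    (h : m ∈ latticeRow (interior D₁₀) x n) : InInteriorD₁₀ (x 0 - m) (x 1 - n) := by
  simpa using inInteriorD₁₀_of_mem_interior h

lemma intCast_preimage_Icc_subset_latticeRow_D₁₀ {x : Fin 2 → ℝ} {k : ℤ} {p q : ℝ}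
    (h : ∀ u, x 0 - q ≤ u → u ≤ x 0 - p → InD₁₀ u (x 1 - k)) :
    Int.cast ⁻¹' Icc p q ⊆ latticeRow D₁₀ x k := fun m ⟨hp, hq⟩ =>
  mem_latticeRow_D₁₀.mpr (h _ (by linarith) (by linarith))

lemma latticeRow_interior_D₁₀_subset_intCast_preimage_Ioo {x : Fin 2 → ℝ} {k : ℤ} {p q : ℝ}
    (h : ∀ u, InInteriorD₁₀ u (x 1 - k) → x 0 - q < u ∧ u < x 0 - p) :
    latticeRow (interior D₁₀) x k ⊆ Int.cast ⁻¹' Ioo p q := fun m hm => by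
  obtain ⟨hq, hp⟩ := h _ (inInteriorD₁₀_of_mem_latticeRow hm)
  constructor <;> linarith

lemma InInteriorD₁₀.abs_snd_lt {u t : ℝ} (h : InInteriorD₁₀ u t) : |t| < 5 / 4 := by
  obtain ⟨h₁, -, -, -, h₅⟩ := h
  rw [abs_lt] at h₁ h₅ ⊢
  constructor <;> linarith

lemma index_mem_of_mem_latticeRow_interior_D₁₀_of_abs_le {x : Fin 2 → ℝ} {n k m : ℤ}
    (ht : |x 1 - n| ≤ 1 / 4) (hm : m ∈ latticeRow (interior D₁₀) x k) :
    k ∈ ({n, n - 1, n + 1} : Finset ℤ) := by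
  rw [abs_le] at ht
  have hk := abs_lt.mp (inInteriorD₁₀_of_mem_latticeRow hm).abs_snd_lt
  have h₁ : k - n < 2 := by exact_mod_cast (by linarith : (k : ℝ) - n < 2)
  have h₂ : -2 < k - n := by exact_mod_cast (by linarith : -2 < (k : ℝ) - n)
  simp only [Finset.mem_insert, Finset.mem_singleton]
  omega

lemma index_mem_of_mem_latticeRow_interior_D₁₀_of_mem_Icc {x : Fin 2 → ℝ} {n k m : ℤ}
    (ht : x 1 - n ∈ Icc (1 / 4) (3 / 4)) (hm : m ∈ latticeRow (interior D₁₀) x k) :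
    k ∈ ({n, n + 1} : Finset ℤ) := by
  have hk := abs_lt.mp (inInteriorD₁₀_of_mem_latticeRow hm).abs_snd_lt
  have h₁ : k - n < 2 := by exact_mod_cast (by linarith [ht.2] : (k : ℝ) - n < 2)
  have h₂ : -1 < k - n := by exact_mod_cast (by linarith [ht.1] : -1 < (k : ℝ) - n)
  simp only [Finset.mem_insert, Finset.mem_singleton]
  omega

lemma five_le_encard_latticeCover_D₁₀_of_abs_le {x : Fin 2 → ℝ} {n : ℤ}
    (ht : |x 1 - n| ≤ 1 / 4) : 5 ≤ (latticeCover D₁₀ x).encard := by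
  set a := x 0
  set t := x 1 - n with ht_def
  rw [abs_le] at ht
  have hmid : Int.cast ⁻¹' Icc (a - 3/2 - 2/5 * t) (a - 3/2 - 2/5 * t + 3) ⊆
      latticeRow D₁₀ x n :=
    intCast_preimage_Icc_subset_latticeRow_D₁₀ fun u h₁ h₂ => by
      simp only [InD₁₀, abs_le]
      and_intros <;> linarith
  have htop : Int.cast ⁻¹' Icc (a - 1 + 8/5 * t) (a - 12/5 * t) ⊆ latticeRow D₁₀ x (n - 1) :=
    intCast_preimage_Icc_subset_latticeRow_D₁₀ fun u h₁ h₂ => by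
      simp only [InD₁₀, abs_le, Int.cast_sub, Int.cast_one]
      and_intros <;> linarith
  have hbot : Int.cast ⁻¹' Icc (a - 12/5 * t) (a - 1 + 8/5 * t + 2) ⊆
      latticeRow D₁₀ x (n + 1) :=
    intCast_preimage_Icc_subset_latticeRow_D₁₀ fun u h₁ h₂ => by
      simp only [InD₁₀, abs_le, Int.cast_add, Int.cast_one]
      and_intros <;> linarith
  calc (5 : ℕ∞) = 3 + 2 := by norm_num
    _ ≤ (Int.cast ⁻¹' Icc (a - 3/2 - 2/5 * t) (a - 3/2 - 2/5 * t + 3)).encard +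
        ((Int.cast ⁻¹' Icc (a - 1 + 8/5 * t) (a - 12/5 * t)).encard +
          (Int.cast ⁻¹' Icc (a - 12/5 * t) (a - 1 + 8/5 * t + 2)).encard) := by
      gcongr
      · simpa using natCast_le_encard_intCast_preimage_Icc (a - 3/2 - 2/5 * t) 3
      · simpa using natCast_le_encard_intCast_preimage_Icc_add (p := a - 1 + 8/5 * t)
          (r := a - 12/5 * t) (ℓ := 2) (by linarith) (by push_cast; linarith)
    _ ≤ (latticeRow D₁₀ x n).encard +
        ((latticeRow D₁₀ x (n - 1)).encard + (latticeRow D₁₀ x (n + 1)).encard) := by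
      gcongr
    _ = ∑ k ∈ {n, n - 1, n + 1}, (latticeRow D₁₀ x k).encard := by
      rw [Finset.sum_insert (by simp only [Finset.mem_insert, Finset.mem_singleton]; omega),
        Finset.sum_pair (by omega)]
    _ ≤ _ := sum_encard_latticeRow_le_encard_latticeCover _ _ _

lemma encard_latticeCover_interior_D₁₀_le_five_of_abs_le {x : Fin 2 → ℝ} {n : ℤ}
    (ht : |x 1 - n| ≤ 1 / 4) : (latticeCover (interior D₁₀) x).encard ≤ 5 := by
  set a := x 0
  set t := x 1 - n with ht_def
  rw [abs_le] at ht
  have hmid : latticeRow (interior D₁₀) x n ⊆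
      Int.cast ⁻¹' Ioo (a - 3/2 - 2/5 * t) (a - 3/2 - 2/5 * t + 3) :=
    latticeRow_interior_D₁₀_subset_intCast_preimage_Ioo fun u ⟨h₁, h₂, h₃, h₄, h₅⟩ => by
      rw [abs_lt] at h₁ h₂ h₃ h₄ h₅
      constructor <;> linarith
  have htop : latticeRow (interior D₁₀) x (n - 1) ⊆
      Int.cast ⁻¹' Ioo (a - 1 + 8/5 * t) (a - 12/5 * t) :=
    latticeRow_interior_D₁₀_subset_intCast_preimage_Ioo fun u ⟨h₁, h₂, h₃, h₄, h₅⟩ => by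
      rw [abs_lt] at h₁ h₂ h₃ h₄ h₅
      push_cast at h₁ h₂ h₃ h₄ h₅
      constructor <;> linarith
  have hbot : latticeRow (interior D₁₀) x (n + 1) ⊆
      Int.cast ⁻¹' Ioo (a - 12/5 * t) (a - 1 + 8/5 * t + 2) :=
    latticeRow_interior_D₁₀_subset_intCast_preimage_Ioo fun u ⟨h₁, h₂, h₃, h₄, h₅⟩ => by
      rw [abs_lt] at h₁ h₂ h₃ h₄ h₅
      push_cast at h₁ h₂ h₃ h₄ h₅
      constructor <;> linarith
  calc _ ≤ ∑ k ∈ {n, n - 1, n + 1}, (latticeRow (interior D₁₀) x k).encard :=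
        encard_latticeCover_le_sum_latticeRow _ fun _ _ =>
          index_mem_of_mem_latticeRow_interior_D₁₀_of_abs_le (abs_le.mpr ht)
    _ = (latticeRow (interior D₁₀) x n).encard + ((latticeRow (interior D₁₀) x (n - 1)).encard +
          (latticeRow (interior D₁₀) x (n + 1)).encard) := by
      rw [Finset.sum_insert (by simp only [Finset.mem_insert, Finset.mem_singleton]; omega),
        Finset.sum_pair (by omega)]
    _ ≤ (Int.cast ⁻¹' Ioo (a - 3/2 - 2/5 * t) (a - 3/2 - 2/5 * t + 3)).encard +
        ((Int.cast ⁻¹' Ioo (a - 1 + 8/5 * t) (a - 12/5 * t)).encard +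
          (Int.cast ⁻¹' Ioo (a - 12/5 * t) (a - 1 + 8/5 * t + 2)).encard) := by
      gcongr
    _ ≤ 3 + 2 := by
      gcongr
      · simpa using encard_intCast_preimage_Ioo_le (a - 3/2 - 2/5 * t) 3
      · simpa using encard_intCast_preimage_Ioo_add_le (p := a - 1 + 8/5 * t)
          (r := a - 12/5 * t) (ℓ := 2) (by linarith) (by push_cast; linarith)
    _ = 5 := by norm_num

lemma five_le_encard_latticeCover_D₁₀_of_mem_Icc {x : Fin 2 → ℝ} {n : ℤ}
    (ht : x 1 - n ∈ Icc (1 / 4) (3 / 4)) : 5 ≤ (latticeCover D₁₀ x).encard := by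
  set a := x 0
  set t := x 1 - n with ht_def
  obtain ⟨ht₁, ht₂⟩ := ht
  have hmid : Int.cast ⁻¹' Icc (a - 17/10 + 2/5 * t) (a + 9/5 - 8/5 * t) ⊆
      latticeRow D₁₀ x n :=
    intCast_preimage_Icc_subset_latticeRow_D₁₀ fun u h₁ h₂ => by
      simp only [InD₁₀, abs_le]
      and_intros <;> linarith
  have hbot : Int.cast ⁻¹' Icc (a + 9/5 - 8/5 * t - 2) (a - 17/10 + 2/5 * t + 5 - 2) ⊆
      latticeRow D₁₀ x (n + 1) :=
    intCast_preimage_Icc_subset_latticeRow_D₁₀ fun u h₁ h₂ => by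
      simp only [InD₁₀, abs_le, Int.cast_add, Int.cast_one]
      and_intros <;> linarith
  calc (5 : ℕ∞) ≤ (Int.cast ⁻¹' Icc (a - 17/10 + 2/5 * t) (a + 9/5 - 8/5 * t)).encard +
        (Int.cast ⁻¹' Icc (a + 9/5 - 8/5 * t) (a - 17/10 + 2/5 * t + 5)).encard := by
        simpa using natCast_le_encard_intCast_preimage_Icc_add (p := a - 17/10 + 2/5 * t)
          (r := a + 9/5 - 8/5 * t) (ℓ := 5) (by linarith) (by push_cast; linarith)
    _ = (Int.cast ⁻¹' Icc (a - 17/10 + 2/5 * t) (a + 9/5 - 8/5 * t)).encard +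
        (Int.cast ⁻¹' Icc (a + 9/5 - 8/5 * t - 2) (a - 17/10 + 2/5 * t + 5 - 2)).encard := by
      simpa using (encard_intCast_preimage_Icc_sub_intCast (a + 9/5 - 8/5 * t)
        (a - 17/10 + 2/5 * t + 5) 2).symm
    _ ≤ (latticeRow D₁₀ x n).encard + (latticeRow D₁₀ x (n + 1)).encard := by
      gcongr
    _ = ∑ k ∈ {n, n + 1}, (latticeRow D₁₀ x k).encard := by
      rw [Finset.sum_pair (by omega)]
    _ ≤ _ := sum_encard_latticeRow_le_encard_latticeCover _ _ _

lemma encard_latticeCover_interior_D₁₀_le_five_of_mem_Icc {x : Fin 2 → ℝ} {n : ℤ}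
    (ht : x 1 - n ∈ Icc (1 / 4) (3 / 4)) : (latticeCover (interior D₁₀) x).encard ≤ 5 := by
  set a := x 0
  set t := x 1 - n with ht_def
  obtain ⟨ht₁, ht₂⟩ := ht
  have hmid : latticeRow (interior D₁₀) x n ⊆
      Int.cast ⁻¹' Ioo (a - 17/10 + 2/5 * t) (a + 9/5 - 8/5 * t) :=
    latticeRow_interior_D₁₀_subset_intCast_preimage_Ioo fun u ⟨h₁, h₂, h₃, h₄, h₅⟩ => by
      rw [abs_lt] at h₁ h₂ h₃ h₄ h₅
      constructor <;> linarith
  have hbot : latticeRow (interior D₁₀) x (n + 1) ⊆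
      Int.cast ⁻¹' Ioo (a + 9/5 - 8/5 * t - 2) (a - 17/10 + 2/5 * t + 5 - 2) :=
    latticeRow_interior_D₁₀_subset_intCast_preimage_Ioo fun u ⟨h₁, h₂, h₃, h₄, h₅⟩ => by
      rw [abs_lt] at h₁ h₂ h₃ h₄ h₅
      push_cast at h₁ h₂ h₃ h₄ h₅
      constructor <;> linarith
  calc _ ≤ ∑ k ∈ {n, n + 1}, (latticeRow (interior D₁₀) x k).encard :=
        encard_latticeCover_le_sum_latticeRow _ fun _ _ =>
          index_mem_of_mem_latticeRow_interior_D₁₀_of_mem_Icc ⟨ht₁, ht₂⟩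
    _ = (latticeRow (interior D₁₀) x n).encard + (latticeRow (interior D₁₀) x (n + 1)).encard :=
        Finset.sum_pair (by omega)
    _ ≤ (Int.cast ⁻¹' Ioo (a - 17/10 + 2/5 * t) (a + 9/5 - 8/5 * t)).encard +
        (Int.cast ⁻¹' Ioo (a + 9/5 - 8/5 * t - 2) (a - 17/10 + 2/5 * t + 5 - 2)).encard := by
      gcongr
    _ = (Int.cast ⁻¹' Ioo (a - 17/10 + 2/5 * t) (a + 9/5 - 8/5 * t)).encard +
        (Int.cast ⁻¹' Ioo (a + 9/5 - 8/5 * t) (a - 17/10 + 2/5 * t + 5)).encard := by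
      simpa using encard_intCast_preimage_Ioo_sub_intCast (a + 9/5 - 8/5 * t)
        (a - 17/10 + 2/5 * t + 5) 2
    _ ≤ 5 := by
      simpa using encard_intCast_preimage_Ioo_add_le (p := a - 17/10 + 2/5 * t)
        (r := a + 9/5 - 8/5 * t) (ℓ := 5) (by linarith) (by push_cast; linarith)

/-- `D₁₀ + ℤ²` is a five-fold lattice tiling of the plane. -/
theorem D10_fivefold_tiling : IsKFoldTiling D₁₀ (intLattice 2) 5 := by
  intro x
  obtain ⟨n, hn₁, hn₂⟩ : ∃ n : ℤ, -(1 / 4) ≤ x 1 - n ∧ x 1 - n < 3 / 4 :=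
    ⟨⌊x 1 + 1 / 4⌋, by linarith [Int.floor_le (x 1 + 1 / 4)],
      by linarith [Int.lt_floor_add_one (x 1 + 1 / 4)]⟩
  rcases le_total (x 1 - n) (1 / 4) with ht | ht
  · have ht' : |x 1 - n| ≤ 1 / 4 := abs_le.mpr ⟨hn₁, ht⟩
    exact ⟨five_le_encard_latticeCover_D₁₀_of_abs_le ht',
      encard_latticeCover_interior_D₁₀_le_five_of_abs_le ht'⟩
  · exact ⟨five_le_encard_latticeCover_D₁₀_of_mem_Icc ⟨ht, hn₂.le⟩,
      encard_latticeCover_interior_D₁₀_le_five_of_mem_Icc ⟨ht, hn₂.le⟩⟩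
end

section
/- Let n ≥ 3, let Q ⊆ ℝ² be a convex body, and let k be a positive integer such that Q + ℤ² is a k-fold lattice tiling of ℝ². Write ℝⁿ = ℝ² × ℝⁿ⁻², let Iⁿ⁻² = [−1/2, 1/2]ⁿ⁻² be the unit cube in ℝⁿ⁻², and let P = Q × Iⁿ⁻² ⊆ ℝⁿ. Then P + ℤⁿ is a k-fold lattice tiling of ℝⁿ. -/
/-!
Over a point `x ∈ ℝⁿ`, a lattice point `v ∈ ℤⁿ` has `x - v ∈ P` exactly when its planar part `u`
has `proj₂ x - u ∈ Q` and each remaining coordinate of `v` lies within `1/2` of that of `x`.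
Completing `u` by the roundings of the remaining coordinates of `x` embeds the translates of `Q`
covering `proj₂ x` into those of `P` covering `x`, which gives multiplicity at least `k`.
For interiors the inequalities are strict, so the remaining coordinates of `v` *are* these
roundings; hence `v ↦ u` is injective and the multiplicity is at most `k`.
-/

open Set

/-- A convex body: compact convex set with nonempty interior. -/
def IsConvexBody {n : ℕ} (K : Set (Fin n → ℝ)) : Prop :=
  Convex ℝ K ∧ IsCompact K ∧ (interior K).Nonempty

/-- Projection of `ℝⁿ` onto the first two coordinates. -/
def proj2 {n : ℕ} (hn : 2 ≤ n) (x : Fin n → ℝ) : Fin 2 → ℝ :=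
  fun j => x (Fin.castLE hn j)

/-- The prism `Q × [-1/2, 1/2]ⁿ⁻²` over a planar set `Q`, viewed in
`ℝⁿ = ℝ² × ℝⁿ⁻²`. -/
def prism {n : ℕ} (hn : 2 ≤ n) (Q : Set (Fin 2 → ℝ)) : Set (Fin n → ℝ) :=
  {x | proj2 hn x ∈ Q ∧ ∀ l : Fin n, 2 ≤ (l : ℕ) → |x l| ≤ 1 / 2}

section Prism

variable {n : ℕ} (hn : 2 ≤ n)

def setProj2 (y : Fin n → ℝ) (u : Fin 2 → ℝ) : Fin n → ℝ :=
  fun i => if h : (i : ℕ) < 2 then u ⟨i, h⟩ else y i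

@[simp]
lemma proj2_setProj2 (y : Fin n → ℝ) (u : Fin 2 → ℝ) : proj2 hn (setProj2 y u) = u :=
  funext fun j => dif_pos j.isLt

@[simp]
lemma proj2_sub (x y : Fin n → ℝ) : proj2 hn (x - y) = proj2 hn x - proj2 hn y :=
  rfl

lemma setProj2_apply_of_two_le (y : Fin n → ℝ) (u : Fin 2 → ℝ) {i : Fin n}
    (hi : 2 ≤ (i : ℕ)) : setProj2 y u i = y i :=
  dif_neg (by omega)

lemma eq_setProj2_of_two_le {x y : Fin n → ℝ} (h : ∀ i : Fin n, 2 ≤ (i : ℕ) → x i = y i) :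
    x = setProj2 y (proj2 hn x) := by
  funext i
  by_cases hi : (i : ℕ) < 2
  · simp [setProj2, proj2, hi]
  · rw [setProj2_apply_of_two_le _ _ (by omega), h i (by omega)]

lemma continuous_setProj2 (y : Fin n → ℝ) : Continuous (setProj2 (n := n) y) := by
  refine continuous_pi fun i => ?_
  by_cases hi : (i : ℕ) < 2
  · simpa [setProj2, hi] using continuous_apply _
  · simpa [setProj2, hi] using continuous_const

lemma isOpenMap_proj2 : IsOpenMap (proj2 hn) :=
  IsOpenMap.of_sections fun x =>
    ⟨setProj2 x, (continuous_setProj2 x).continuousAt,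
      (eq_setProj2_of_two_le hn fun _ _ => rfl).symm, proj2_setProj2 hn x⟩

lemma interior_prism_subset (Q : Set (Fin 2 → ℝ)) :
    interior (prism hn Q) ⊆
      {x | proj2 hn x ∈ interior Q ∧ ∀ l : Fin n, 2 ≤ (l : ℕ) → |x l| < 1 / 2} := by
  intro x hx
  refine ⟨?_, fun l hl => ?_⟩
  · rw [← mem_preimage, (isOpenMap_proj2 hn).preimage_interior_eq_interior_preimage
      (continuous_pi fun _ => continuous_apply _)]
    exact interior_mono (fun y hy => hy.1) hx
  · have : x ∈ interior ((fun y : Fin n → ℝ => y l) ⁻¹' Icc (-(1 / 2)) (1 / 2)) :=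
      interior_mono (fun y hy => abs_le.mp (hy.2 l hl)) hx
    rw [← (isOpenMap_eval l).preimage_interior_eq_interior_preimage (continuous_apply l),
      interior_Icc] at this
    exact abs_lt.mpr this

lemma proj2_mem_intLattice {v : Fin n → ℝ} (hv : v ∈ intLattice n) :
    proj2 hn v ∈ intLattice 2 :=
  fun _ => hv _

lemma setProj2_mem_intLattice {y : Fin n → ℝ} {u : Fin 2 → ℝ} (hy : y ∈ intLattice n)
    (hu : u ∈ intLattice 2) : setProj2 y u ∈ intLattice n := by
  intro i
  by_cases hi : (i : ℕ) < 2
  · simpa [setProj2, hi] using hu ⟨i, hi⟩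
  · simpa [setProj2, hi] using hy i

lemma round_eq_of_abs_sub_lt {α : Type*} [Field α] [LinearOrder α] [IsStrictOrderedRing α]
    [FloorRing α] {x : α} {m : ℤ} (h : |x - m| < 1 / 2) : round x = m := by
  rw [round_eq_iff]
  constructor <;> linarith [abs_lt.mp h]

variable (Q : Set (Fin 2 → ℝ)) (x : Fin n → ℝ)

lemma encard_lattice_le_encard_lattice_prism :
    {u | u ∈ intLattice 2 ∧ proj2 hn x - u ∈ Q}.encard ≤
      {v | v ∈ intLattice n ∧ x - v ∈ prism hn Q}.encard := by
  set r : Fin n → ℝ := fun i => (round (x i) : ℝ)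
  refine encard_le_encard_of_injOn (f := setProj2 r)
    (fun u ⟨hu, huQ⟩ => ⟨?_, ?_, fun l hl => ?_⟩)
    (Function.LeftInverse.injective (g := proj2 hn) (proj2_setProj2 hn r)).injOn
  · exact setProj2_mem_intLattice (fun i => ⟨_, rfl⟩) hu
  · simpa using huQ
  · simpa [setProj2_apply_of_two_le _ _ hl, r] using abs_sub_round (x l)

lemma encard_lattice_interior_prism_le :
    {v | v ∈ intLattice n ∧ x - v ∈ interior (prism hn Q)}.encard ≤
      {u | u ∈ intLattice 2 ∧ proj2 hn x - u ∈ interior Q}.encard := by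
  set r : Fin n → ℝ := fun i => (round (x i) : ℝ)
  have eq_setProj2_round : ∀ v ∈ {v | v ∈ intLattice n ∧ x - v ∈ interior (prism hn Q)},
      v = setProj2 r (proj2 hn v) := by
    rintro v ⟨hv, hxv⟩
    refine eq_setProj2_of_two_le hn fun i hi => ?_
    obtain ⟨m, hm⟩ := hv i
    have hclose := (interior_prism_subset hn Q hxv).2 i hi
    simp only [Pi.sub_apply, hm] at hclose
    simp [r, hm, round_eq_of_abs_sub_lt hclose]
  refine encard_le_encard_of_injOn (f := proj2 hn)
    (fun v hv => ⟨proj2_mem_intLattice hn hv.1, (interior_prism_subset hn Q hv.2).1⟩)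
    (fun v hv w hw h => by rw [eq_setProj2_round v hv, eq_setProj2_round w hw, h])

lemma IsKFoldTiling.prism {Q : Set (Fin 2 → ℝ)} {k : ℕ}
    (h : IsKFoldTiling Q (intLattice 2) k) : IsKFoldTiling (prism hn Q) (intLattice n) k :=
  fun x =>
    ⟨(h (proj2 hn x)).1.trans (encard_lattice_le_encard_lattice_prism hn Q x),
      (encard_lattice_interior_prism_le hn Q x).trans (h (proj2 hn x)).2⟩

end Prism

/-- If `Q + ℤ²` is a `k`-fold lattice tiling of the plane, then the prism
`P = Q × [-1/2, 1/2]ⁿ⁻²` gives a `k`-fold lattice tiling `P + ℤⁿ` of `ℝⁿ`. -/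
theorem prism_kfold_tiling (n : ℕ) (hn : 3 ≤ n) (Q : Set (Fin 2 → ℝ))
    (k : ℕ) (hQtile : IsKFoldTiling Q (intLattice 2) k) :
    IsKFoldTiling (prism (by omega : 2 ≤ n) Q) (intLattice n) k :=
  hQtile.prism _
end
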